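/- arXiv:2403.15877 — 2 statements merged into one kernel-verified Lean document; each statement's English description precedes it below -/
import Mathlib

section
/- (IPSS main bound, abstract form) Let S ⊆ {1,...,p}, τ ∈ (0,1], m ≥ 1, B ≥ 1, μ a probability measure on Λ, and q : Λ → [0,p] measurable. Suppose for each j ∈ S^c there are measurable {0,1}-valued U_{j,b}(λ), b = 1,...,B, such that for all λ ∈ Λ and all nonempty T ⊆ {1,...,B} with |T| ≤ m, P(∀ b ∈ T : U_{j,b}(λ) = 1) ≤ (q(λ)/p)^{2|T|}, and let π̂_j(λ) ≤ (1 + (1/B)∑_b U_{j,b}(λ))/2 be measurable. Then E|{j ∈ S^c : ∫_Λ h_m(π̂_j(λ)) μ(dλ) ≥ τ}| ≤ (p/(τ B^m)) ∑_{k_1+⋯+k_B=m} (m!/(k_1!⋯k_B!)) ∫_Λ (q(λ)/p)^{2∑_b 1(k_b≠0)} μ(dλ). -/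
/-!
Write `π̃ = (1/B) ∑_b U_b`. The assumption on `π̂` gives `h_m(π̂) ≤ π̃^m`. By the multinomial
theorem `(∑_b U_b)^m = ∑_k (m choose k) ∏_b U_b^{k_b}`, and for `{0,1}`-valued `U_b` each monomial
is the indicator that `U_b = 1` for every `b` in the support of `k`, a set of at most `m` indices;
so the joint-selection bound controls `E π̃^m` term by term. Markov's inequality for the
`μ`-average of `h_m(π̂_j)`, Tonelli, and a sum over the at most `p` features `j ∉ S` finish.
-/

open MeasureTheory Finset

section ZeroOne

variable {ι Ω : Type*} [Fintype ι]

lemma prod_pow_eq_indicator_of_zero_one {U : ι → Ω → ℝ} (h01 : ∀ b ω, U b ω = 0 ∨ U b ω = 1)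
    (k : ι → ℕ) (ω : Ω) :
    ∏ b, U b ω ^ k b = {ω | ∀ b ∈ univ.filter (k · ≠ 0), U b ω = 1}.indicator 1 ω := by
  by_cases h : ω ∈ {ω | ∀ b ∈ univ.filter (k · ≠ 0), U b ω = 1}
  · rw [Set.indicator_of_mem h, Set.mem_ofPred_eq] at *
    refine prod_eq_one fun b _ => ?_
    by_cases hk : k b = 0
    · simp [hk]
    · simp [h b (by simp [hk])]
  · rw [Set.indicator_of_notMem h]
    rw [Set.mem_ofPred_eq] at h
    push Not at h
    obtain ⟨b, hb, hb1⟩ := h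
    refine prod_eq_zero (mem_univ b) ?_
    simp [(h01 b ω).resolve_right hb1, (mem_filter.1 hb).2]

lemma card_filter_ne_zero_le_of_mem_piAntidiag [DecidableEq ι] {k : ι → ℕ} {m : ℕ}
    (hk : k ∈ piAntidiag univ m) : #(univ.filter (k · ≠ 0)) ≤ m := by
  rw [mem_piAntidiag] at hk
  calc #(univ.filter (k · ≠ 0)) = ∑ b ∈ univ.filter (k · ≠ 0), 1 := card_eq_sum_ones _
    _ ≤ ∑ b ∈ univ.filter (k · ≠ 0), k b :=
      sum_le_sum fun b hb => Nat.one_le_iff_ne_zero.2 (mem_filter.1 hb).2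
    _ = m := by rw [sum_filter_ne_zero, hk.1]

variable [MeasurableSpace Ω] (P : Measure Ω) [IsFiniteMeasure P]

theorem integral_sum_pow_eq_of_zero_one [DecidableEq ι] {U : ι → Ω → ℝ}
    (hU : ∀ b, Measurable (U b)) (h01 : ∀ b ω, U b ω = 0 ∨ U b ω = 1) (m : ℕ) :
    ∫ ω, (∑ b, U b ω) ^ m ∂P = ∑ k ∈ piAntidiag univ m,
      (Nat.multinomial univ k : ℝ) * P.real {ω | ∀ b ∈ univ.filter (k · ≠ 0), U b ω = 1} := by
  have hA : ∀ T : Finset ι, MeasurableSet {ω | ∀ b ∈ T, U b ω = 1} := fun T => by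
    simp only [Set.ofPred_forall]
    exact .biInter T.countable_toSet fun b _ => hU b (measurableSet_singleton 1)
  simp_rw [sum_pow_eq_sum_piAntidiag, prod_pow_eq_indicator_of_zero_one h01]
  rw [integral_finsetSum _ fun k _ => ((integrable_const 1).indicator (hA _)).const_mul _]
  simp_rw [integral_const_mul, integral_indicator_one (hA _)]

theorem integral_sum_pow_le_of_measureReal_le [DecidableEq ι] {U : ι → Ω → ℝ}
    (hU : ∀ b, Measurable (U b)) (h01 : ∀ b ω, U b ω = 0 ∨ U b ω = 1) {m : ℕ}
    {c : Finset ι → ℝ} (hc : ∀ T : Finset ι, #T ≤ m → P.real {ω | ∀ b ∈ T, U b ω = 1} ≤ c T) :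
    ∫ ω, (∑ b, U b ω) ^ m ∂P ≤
      ∑ k ∈ piAntidiag univ m, (Nat.multinomial univ k : ℝ) * c (univ.filter (k · ≠ 0)) := by
  rw [integral_sum_pow_eq_of_zero_one P hU h01]
  exact sum_le_sum fun k hk => mul_le_mul_of_nonneg_left
    (hc _ (card_filter_ne_zero_le_of_mem_piAntidiag hk)) (Nat.cast_nonneg _)

end ZeroOne

theorem mul_measureReal_le_integral_integral {Λ Ω : Type*} [MeasurableSpace Λ] [MeasurableSpace Ω]
    {μ : Measure Λ} {P : Measure Ω} [SFinite μ] [SFinite P] {F G : Λ × Ω → ℝ}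
    (hF : AEStronglyMeasurable F (μ.prod P)) (hF0 : 0 ≤ F) (hFG : F ≤ G)
    (hG : Integrable G (μ.prod P)) (τ : ℝ) :
    τ * P.real {ω | τ ≤ ∫ l, F (l, ω) ∂μ} ≤ ∫ l, ∫ ω, G (l, ω) ∂P ∂μ := by
  have hFi : Integrable F (μ.prod P) :=
    hG.mono' hF (ae_of_all _ fun z => by simpa [abs_of_nonneg (hF0 z)] using hFG z)
  calc τ * P.real {ω | τ ≤ ∫ l, F (l, ω) ∂μ} ≤ ∫ ω, ∫ l, F (l, ω) ∂μ ∂P :=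
        mul_meas_ge_le_integral_of_nonneg (f := fun ω => ∫ l, F (l, ω) ∂μ)
          (ae_of_all _ fun ω => integral_nonneg fun l => hF0 _) hFi.integral_prod_right τ
    _ = ∫ z, F z ∂μ.prod P := (integral_prod_symm F hFi).symm
    _ ≤ ∫ z, G z ∂μ.prod P := integral_mono hFi hG hFG
    _ = ∫ l, ∫ ω, G (l, ω) ∂P ∂μ := integral_prod G hG

theorem integral_card_filter_eq_sum_measureReal {ι Ω : Type*} [MeasurableSpace Ω]
    (P : Measure Ω) [IsFiniteMeasure P] (s : Finset ι) {A : ι → Ω → Prop}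
    [∀ j, DecidablePred (A j)] (hA : ∀ j ∈ s, MeasurableSet {ω | A j ω}) :
    ∫ ω, (#(s.filter (A · ω)) : ℝ) ∂P = ∑ j ∈ s, P.real {ω | A j ω} := by
  have hcard : ∀ ω, (#(s.filter (A · ω)) : ℝ) = ∑ j ∈ s, {ω | A j ω}.indicator 1 ω := fun ω => by
    rw [card_filter, Nat.cast_sum]
    refine sum_congr rfl fun j _ => ?_
    by_cases h : A j ω <;> simp [h]
  simp_rw [hcard]
  rw [integral_finsetSum _ fun j hj => (integrable_const 1).indicator (hA j hj)]
  exact sum_congr rfl fun j hj => integral_indicator_one (hA j hj)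

lemma ite_pow_le_pow {x s : ℝ} (m : ℕ) (hs : 0 ≤ s) (hx : x ≤ (1 + s) / 2) :
    (if x ≥ 1 / 2 then (2 * x - 1) ^ m else 0) ≤ s ^ m := by
  split_ifs with h
  · exact pow_le_pow_left₀ (by linarith) (by linarith) m
  · positivity

lemma ite_pow_nonneg (x : ℝ) (m : ℕ) : 0 ≤ if x ≥ 1 / 2 then (2 * x - 1) ^ m else 0 := by
  split_ifs with h
  · exact pow_nonneg (by linarith) m
  · exact le_rfl

lemma Measurable.ite_pow {α : Type*} [MeasurableSpace α] {f : α → ℝ} (hf : Measurable f) (m : ℕ) :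
    Measurable fun a => if f a ≥ 1 / 2 then (2 * f a - 1) ^ m else 0 :=
  Measurable.ite (measurableSet_le measurable_const hf) (((hf.const_mul 2).sub_const 1).pow_const m)
    measurable_const

lemma sum_div_mem_Icc_of_zero_one {B : ℕ} {u : Fin B → ℝ} (hu : ∀ b, u b = 0 ∨ u b = 1) :
    (∑ b, u b) / B ∈ Set.Icc (0 : ℝ) 1 := by
  have hu' : ∀ b, 0 ≤ u b ∧ u b ≤ 1 := fun b => by rcases hu b with h | h <;> simp [h]
  exact ⟨div_nonneg (sum_nonneg fun b _ => (hu' b).1) B.cast_nonneg,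
    div_le_one_of_le₀ ((sum_le_sum fun b _ => (hu' b).2).trans (by simp)) B.cast_nonneg⟩

lemma integrable_pow_of_mem_Icc {α : Type*} [MeasurableSpace α] {μ : Measure α} [IsFiniteMeasure μ]
    {f : α → ℝ} (hf : Measurable f) (h : ∀ x, f x ∈ Set.Icc (0 : ℝ) 1) (n : ℕ) :
    Integrable (fun x => f x ^ n) μ :=
  .of_bound (hf.pow_const n).aestronglyMeasurable 1 (ae_of_all _ fun x => by
    rw [Real.norm_eq_abs, abs_of_nonneg (pow_nonneg (h x).1 n)]
    exact pow_le_one₀ (h x).1 (h x).2)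

section Feature

variable {Ω Λ : Type*} [MeasurableSpace Ω] [MeasurableSpace Λ]
  (P : Measure Ω) [IsProbabilityMeasure P] {m B : ℕ}

theorem integral_sum_div_pow_le {U : Fin B → Ω → ℝ} (hU : ∀ b, Measurable (U b))
    (h01 : ∀ b ω, U b ω = 0 ∨ U b ω = 1) {r : ℝ} (hr : 0 ≤ r)
    (hjoint : ∀ T : Finset (Fin B), T.Nonempty → #T ≤ m →
      P {ω | ∀ b ∈ T, U b ω = 1} ≤ ENNReal.ofReal (r ^ (2 * #T))) :
    ∫ ω, ((∑ b, U b ω) / B) ^ m ∂P ≤ (∑ k ∈ Nat.antidiagonalTuple B m,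
      (Nat.multinomial univ k : ℝ) * r ^ (2 * #(univ.filter (k · ≠ 0)))) / B ^ m := by
  have hjoint_real : ∀ T : Finset (Fin B), #T ≤ m →
      P.real {ω | ∀ b ∈ T, U b ω = 1} ≤ r ^ (2 * #T) := fun T hT => by
    rcases T.eq_empty_or_nonempty with rfl | hne
    · simp
    · exact ENNReal.toReal_le_of_le_ofReal (pow_nonneg hr _) (hjoint T hne hT)
  simp only [div_pow _ (B : ℝ)]
  rw [integral_div, ← piAntidiag_univ_fin_eq_antidiagonalTuple]
  exact div_le_div_of_nonneg_right (integral_sum_pow_le_of_measureReal_le P hU h01 hjoint_real)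
    (by positivity)

theorem mul_measureReal_integral_ite_pow_le (μ : Measure Λ) [IsFiniteMeasure μ]
    {r : Λ → ℝ} (hr_meas : Measurable r) (hr : ∀ l, r l ∈ Set.Icc (0 : ℝ) 1)
    {U : Fin B → Λ → Ω → ℝ} (hU : ∀ b, Measurable fun x : Λ × Ω => U b x.1 x.2)
    (h01 : ∀ b l ω, U b l ω = 0 ∨ U b l ω = 1)
    (hjoint : ∀ l, ∀ T : Finset (Fin B), T.Nonempty → #T ≤ m →
      P {ω | ∀ b ∈ T, U b l ω = 1} ≤ ENNReal.ofReal (r l ^ (2 * #T)))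
    {pihat : Λ → Ω → ℝ} (hpihat : Measurable fun x : Λ × Ω => pihat x.1 x.2)
    (hle : ∀ l ω, pihat l ω ≤ (1 + (∑ b, U b l ω) / B) / 2) (τ : ℝ) :
    τ * P.real {ω | τ ≤ ∫ l, (if pihat l ω ≥ 1 / 2 then (2 * pihat l ω - 1) ^ m else 0) ∂μ} ≤
      (∑ k ∈ Nat.antidiagonalTuple B m, (Nat.multinomial univ k : ℝ) *
        ∫ l, r l ^ (2 * #(univ.filter (k · ≠ 0))) ∂μ) / B ^ m := by
  set avg : Λ × Ω → ℝ := fun z => (∑ b, U b z.1 z.2) / B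
  have havg : ∀ z, avg z ∈ Set.Icc (0 : ℝ) 1 := fun z =>
    sum_div_mem_Icc_of_zero_one fun b => h01 b z.1 z.2
  have hG : Integrable (fun z => avg z ^ m) (μ.prod P) :=
    integrable_pow_of_mem_Icc ((measurable_sum _ fun b _ => hU b).div_const _) havg m
  have hterm_int : ∀ k : Fin B → ℕ, Integrable (fun l => (Nat.multinomial univ k : ℝ) *
      r l ^ (2 * #(univ.filter (k · ≠ 0)))) μ := fun k =>
    (integrable_pow_of_mem_Icc hr_meas hr _).const_mul _
  calc _ ≤ ∫ l, ∫ ω, avg (l, ω) ^ m ∂P ∂μ :=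
        mul_measureReal_le_integral_integral (hpihat.ite_pow m).aestronglyMeasurable
          (fun z => ite_pow_nonneg _ m) (fun z => ite_pow_le_pow m (havg z).1 (hle z.1 z.2)) hG τ
    _ ≤ ∫ l, (∑ k ∈ Nat.antidiagonalTuple B m, (Nat.multinomial univ k : ℝ) *
          r l ^ (2 * #(univ.filter (k · ≠ 0)))) / B ^ m ∂μ :=
        integral_mono hG.integral_prod_left
          ((integrable_finsetSum _ fun k _ => hterm_int k).div_const _) fun l =>
          integral_sum_div_pow_le P (U := fun b => U b l)
            (fun b => (hU b).comp measurable_prodMk_left) (h01 · l) (hr l).1 (hjoint l)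
    _ = _ := by
        rw [integral_div, integral_finsetSum _ fun k _ => hterm_int k]
        simp_rw [integral_const_mul]

end Feature

open Classical in
theorem stmt14_general {Ω Λ : Type*} [MeasurableSpace Ω] [MeasurableSpace Λ]
    (P : Measure Ω) [IsProbabilityMeasure P]
    (μ : Measure Λ) [IsProbabilityMeasure μ]
    (p : ℕ) (S : Finset (Fin p))
    (τ : ℝ) (hτ : τ ∈ Set.Ioc (0:ℝ) 1) (m B : ℕ)
    (q : Λ → ℝ) (hqmeas : Measurable q) (hq : ∀ l, q l ∈ Set.Icc (0:ℝ) p)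
    (U : Fin p → Fin B → Λ → Ω → ℝ)
    (hUmeas : ∀ j b, Measurable fun x : Λ × Ω => U j b x.1 x.2)
    (hU01 : ∀ j b l ω, U j b l ω = 0 ∨ U j b l ω = 1)
    (hjoint : ∀ j ∉ S, ∀ l : Λ, ∀ T : Finset (Fin B), T.Nonempty → T.card ≤ m →
      P {ω | ∀ b ∈ T, U j b l ω = 1} ≤ ENNReal.ofReal ((q l / p) ^ (2 * T.card)))
    (pihat : Fin p → Λ → Ω → ℝ)
    (hmeas : ∀ j, Measurable fun x : Λ × Ω => pihat j x.1 x.2)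
    (hle : ∀ j ∉ S, ∀ l ω,
      pihat j l ω ≤ (1 + (∑ b, U j b l ω) / B) / 2) :
    ∫ ω, ((Finset.univ.filter (fun j => j ∉ S ∧
        τ ≤ ∫ l, (if pihat j l ω ≥ 1/2 then (2 * pihat j l ω - 1) ^ m else 0) ∂μ)).card
          : ℝ) ∂P
      ≤ ((p : ℝ) / (τ * (B:ℝ) ^ m)) *
          ∑ k ∈ Finset.Nat.antidiagonalTuple B m,
            (Nat.multinomial Finset.univ k : ℝ) *
              ∫ l, (q l / p) ^ (2 * (Finset.univ.filter (fun b => k b ≠ 0)).card) ∂μ := by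
  set C := ∑ k ∈ Nat.antidiagonalTuple B m, (Nat.multinomial univ k : ℝ) *
    ∫ l, (q l / p) ^ (2 * #(univ.filter (k · ≠ 0))) ∂μ
  have hr : ∀ l, q l / p ∈ Set.Icc (0 : ℝ) 1 := fun l =>
    ⟨div_nonneg (hq l).1 p.cast_nonneg, div_le_one_of_le₀ (hq l).2 p.cast_nonneg⟩
  have hC : 0 ≤ C := sum_nonneg fun k _ =>
    mul_nonneg (Nat.cast_nonneg _) (integral_nonneg fun l => pow_nonneg (hr l).1 _)
  calc _ = ∑ j ∈ univ.filter (· ∉ S), P.real {ω | τ ≤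
        ∫ l, (if pihat j l ω ≥ 1/2 then (2 * pihat j l ω - 1) ^ m else 0) ∂μ} := by
        simp only [← filter_filter]
        exact integral_card_filter_eq_sum_measureReal P _ fun j _ => measurableSet_le
          measurable_const ((hmeas j).ite_pow m).stronglyMeasurable.integral_prod_left'.measurable
    _ ≤ ∑ j ∈ univ.filter (· ∉ S), C / B ^ m / τ := sum_le_sum fun j hj => by
        rw [le_div_iff₀ hτ.1, mul_comm]
        exact mul_measureReal_integral_ite_pow_le P μ (hqmeas.div_const _) hr (hUmeas j) (hU01 j)
          (hjoint j (mem_filter.1 hj).2) (hmeas j) (hle j (mem_filter.1 hj).2) τ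
    _ ≤ p * (C / B ^ m / τ) := by
        rw [sum_const, nsmul_eq_mul]
        refine mul_le_mul_of_nonneg_right ?_ (div_nonneg (by positivity) hτ.1.le)
        exact_mod_cast (card_filter_le _ _).trans (card_fin p).le
    _ = _ := by ring

open Classical in
/-- Abstract IPSS bound (Theorem 1): with `h_m(x) = (2x−1)^m 1(x ≥ 1/2)`, if for each
false feature `j ∉ S` the indicators `U_{j,b}(λ)` satisfy the joint-selection bound
`P(∀ b ∈ T, U_{j,b}(λ) = 1) ≤ (q(λ)/p)^{2|T|}` for nonempty `T` with `|T| ≤ m`, and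
`π̂_j(λ) ≤ (1 + (1/B) ∑_b U_{j,b}(λ))/2`, then the expected number of selected false
positives is at most
`(p/(τ B^m)) ∑_{k_1+⋯+k_B=m} (m!/(k_1!⋯k_B!)) ∫_Λ (q(λ)/p)^{2 N_k} μ(dλ)`. -/
theorem stmt14 {Ω Λ : Type*} [MeasurableSpace Ω] [MeasurableSpace Λ]
    (P : Measure Ω) [IsProbabilityMeasure P]
    (μ : Measure Λ) [IsProbabilityMeasure μ]
    (p : ℕ) (hp : 1 ≤ p) (S : Finset (Fin p))
    (τ : ℝ) (hτ : τ ∈ Set.Ioc (0:ℝ) 1) (m B : ℕ) (hm : 1 ≤ m) (hB : 1 ≤ B)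
    (q : Λ → ℝ) (hqmeas : Measurable q) (hq : ∀ l, q l ∈ Set.Icc (0:ℝ) p)
    (U : Fin p → Fin B → Λ → Ω → ℝ)
    (hUmeas : ∀ j b, Measurable fun x : Λ × Ω => U j b x.1 x.2)
    (hU01 : ∀ j b l ω, U j b l ω = 0 ∨ U j b l ω = 1)
    (hjoint : ∀ j ∉ S, ∀ l : Λ, ∀ T : Finset (Fin B), T.Nonempty → T.card ≤ m →
      P {ω | ∀ b ∈ T, U j b l ω = 1} ≤ ENNReal.ofReal ((q l / p) ^ (2 * T.card)))
    (pihat : Fin p → Λ → Ω → ℝ)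
    (hmeas : ∀ j, Measurable fun x : Λ × Ω => pihat j x.1 x.2)
    (hrange : ∀ j l ω, pihat j l ω ∈ Set.Icc (0:ℝ) 1)
    (hle : ∀ j ∉ S, ∀ l ω,
      pihat j l ω ≤ (1 + (∑ b, U j b l ω) / B) / 2) :
    ∫ ω, ((Finset.univ.filter (fun j => j ∉ S ∧
        τ ≤ ∫ l, (if pihat j l ω ≥ 1/2 then (2 * pihat j l ω - 1) ^ m else 0) ∂μ)).card
          : ℝ) ∂P
      ≤ ((p : ℝ) / (τ * (B:ℝ) ^ m)) *
          ∑ k ∈ Finset.Nat.antidiagonalTuple B m,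
            (Nat.multinomial Finset.univ k : ℝ) *
              ∫ l, (q l / p) ^ (2 * (Finset.univ.filter (fun b => k b ≠ 0)).card) ∂μ :=
  stmt14_general P μ p S τ hτ m B q hqmeas hq U hUmeas hU01 hjoint pihat hmeas hle
end

section
/- (IPSS quadratic bound) Under the hypotheses of the abstract IPSS bound with m = 2 and B ≥ 2, the expected number of selected false positives satisfies E(FP) ≤ (1/τ) ∫_Λ ( q(λ)^2/(Bp) + (B−1)q(λ)^4/(B p^3) ) μ(dλ). -/
/-!
Every selected false positive `j` has `τ ≤ ∫ h₂(π̂_j) dμ`, so by Markov's inequality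
`E(FP) ≤ τ⁻¹ ∑_{j ∉ S} E ∫ h₂(π̂_j) dμ`. Since `π̂_j ≤ (1 + π̃_j)/2`, `h₂(π̂_j) ≤ π̃_j²`, and
expanding the square of the mean `π̃_j` of the `B` indicators gives
`E π̃_j² = B⁻² ∑_{b,b'} P(U_b = U_{b'} = 1) ≤ B⁻² (B c + B(B-1) c²)` with `c = (q/p)²`: a diagonal
pair is a singleton `T`, an off-diagonal one a `T` of size two. Fubini and `|Sᶜ| ≤ p` finish.
-/

open MeasureTheory Finset

noncomputable def ipssH (m : ℕ) (x : ℝ) : ℝ := if x ≥ 1 / 2 then (2 * x - 1) ^ m else 0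

lemma ipssH_nonneg (m : ℕ) (x : ℝ) : 0 ≤ ipssH m x := by
  unfold ipssH
  split_ifs with hx
  · exact pow_nonneg (by linarith) m
  · exact le_rfl

lemma ipssH_le_pow {m : ℕ} {x t : ℝ} (ht : 0 ≤ t) (hx : x ≤ (1 + t) / 2) :
    ipssH m x ≤ t ^ m := by
  unfold ipssH
  split_ifs with hx'
  · exact pow_le_pow_left₀ (by linarith) (by linarith) m
  · positivity

lemma measurable_ipssH (m : ℕ) : Measurable (ipssH m) :=
  Measurable.ite (measurableSet_le measurable_const measurable_id) (by fun_prop) measurable_const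

noncomputable def secondMomentBound (n : ℕ) (c : ℝ) : ℝ := c / n + (n - 1) * c ^ 2 / n

lemma secondMomentBound_mem_Icc {n : ℕ} (hn : 1 ≤ n) {c : ℝ} (hc : c ∈ Set.Icc (0 : ℝ) 1) :
    secondMomentBound n c ∈ Set.Icc (0 : ℝ) 1 := by
  obtain ⟨hc0, hc1⟩ := hc
  have hn' : (0 : ℝ) ≤ n - 1 := by
    have : (1 : ℝ) ≤ n := by exact_mod_cast hn
    linarith
  have hc2 : c ^ 2 ≤ 1 := pow_le_one₀ hc0 hc1
  unfold secondMomentBound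
  rw [← add_div]
  constructor
  · positivity
  · rw [div_le_one (by linarith)]
    nlinarith [mul_le_mul_of_nonneg_left hc2 hn']

lemma sum_sum_pow_card_pair {ι R : Type*} [Fintype ι] [DecidableEq ι] [CommRing R] (c : R) :
    ∑ b : ι, ∑ b' : ι, c ^ #{b, b'} =
      Fintype.card ι * c + Fintype.card ι * (Fintype.card ι - 1) * c ^ 2 := by
  have hpair : ∀ b b' : ι, c ^ #{b, b'} = c ^ 2 + if b = b' then c - c ^ 2 else 0 := by
    intro b b'
    split_ifs with h
    · subst h
      simp
    · rw [card_pair h]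
      ring
  simp only [hpair, sum_add_distrib, sum_ite_eq, mem_univ, if_true, sum_const, card_univ,
    nsmul_eq_mul]
  ring

section ZeroOne

variable {Ω ι : Type*} {X : ι → Ω → ℝ}

lemma mul_eq_indicator_pair [DecidableEq ι] (hX : ∀ b ω, X b ω = 0 ∨ X b ω = 1) (b b' : ι) :
    (fun ω => X b ω * X b' ω) = {ω | ∀ c ∈ ({b, b'} : Finset ι), X c ω = 1}.indicator 1 := by
  funext ω
  rcases hX b ω with h | h <;> rcases hX b' ω with h' | h' <;> simp [h, h']

variable [MeasurableSpace Ω]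

lemma measurableSet_forall_mem_eq_one (hXm : ∀ b, Measurable (X b)) (T : Finset ι) :
    MeasurableSet {ω | ∀ c ∈ T, X c ω = 1} := by
  simp only [Set.ofPred_forall]
  exact measurableSet_biInter T fun c _ => hXm c (measurableSet_singleton 1)

lemma integral_sq_sum_le {P : Measure Ω} [IsFiniteMeasure P] [Fintype ι]
    (hX : ∀ b ω, X b ω = 0 ∨ X b ω = 1) (hXm : ∀ b, Measurable (X b)) {c : ℝ} (hc : 0 ≤ c)
    (hjoint : ∀ T : Finset ι, T.Nonempty → #T ≤ 2 →
      P {ω | ∀ b ∈ T, X b ω = 1} ≤ ENNReal.ofReal (c ^ #T)) :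
    ∫ ω, (∑ b, X b ω) ^ 2 ∂P ≤
      Fintype.card ι * c + Fintype.card ι * (Fintype.card ι - 1) * c ^ 2 := by
  classical
  have hint : ∀ b b', Integrable (fun ω => X b ω * X b' ω) P := fun b b' => by
    rw [mul_eq_indicator_pair hX]
    exact (integrable_const 1).indicator (measurableSet_forall_mem_eq_one hXm _)
  calc ∫ ω, (∑ b, X b ω) ^ 2 ∂P = ∑ b, ∑ b', ∫ ω, X b ω * X b' ω ∂P := by
        simp_rw [sq, sum_mul_sum]
        rw [integral_finsetSum _ fun b _ => integrable_finsetSum _ fun b' _ => hint b b']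
        exact sum_congr rfl fun b _ => integral_finsetSum _ fun b' _ => hint b b'
    _ ≤ ∑ b : ι, ∑ b' : ι, c ^ #{b, b'} := by
        gcongr with b _ b' _
        rw [mul_eq_indicator_pair hX,
          integral_indicator_one (measurableSet_forall_mem_eq_one hXm _)]
        exact ENNReal.toReal_le_of_le_ofReal (by positivity)
          (hjoint _ (insert_nonempty _ _) card_le_two)
    _ = _ := sum_sum_pow_card_pair c

end ZeroOne

lemma sum_div_mem_Icc {n : ℕ} {x : Fin n → ℝ} (hx : ∀ b, x b = 0 ∨ x b = 1) :
    (∑ b, x b) / n ∈ Set.Icc (0 : ℝ) 1 := by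
  have h01 : ∀ b, x b ∈ Set.Icc (0 : ℝ) 1 := fun b => by
    rcases hx b with h | h <;> simp [h]
  refine ⟨div_nonneg (sum_nonneg fun b _ => (h01 b).1) n.cast_nonneg,
    div_le_one_of_le₀ ?_ n.cast_nonneg⟩
  calc ∑ b, x b ≤ ∑ _b : Fin n, (1 : ℝ) := sum_le_sum fun b _ => (h01 b).2
    _ = n := by simp

lemma ipssH_two_le_one {n : ℕ} {x : Fin n → ℝ} (hx : ∀ b, x b = 0 ∨ x b = 1) {y : ℝ}
    (hy : y ≤ (1 + (∑ b, x b) / n) / 2) : ipssH 2 y ≤ 1 :=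
  have hmean := sum_div_mem_Icc hx
  (ipssH_le_pow hmean.1 hy).trans (pow_le_one₀ hmean.1 hmean.2)

section Selection

variable {Ω Λ : Type*} [MeasurableSpace Ω] {P : Measure Ω} [IsFiniteMeasure P] {n : ℕ}

lemma integral_ipssH_le {X : Fin n → Ω → ℝ} (hX : ∀ b ω, X b ω = 0 ∨ X b ω = 1)
    (hXm : ∀ b, Measurable (X b)) {π : Ω → ℝ}
    (hπ : ∀ ω, π ω ≤ (1 + (∑ b, X b ω) / n) / 2) {c : ℝ} (hc : 0 ≤ c)
    (hjoint : ∀ T : Finset (Fin n), T.Nonempty → #T ≤ 2 →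
      P {ω | ∀ b ∈ T, X b ω = 1} ≤ ENNReal.ofReal (c ^ #T)) :
    ∫ ω, ipssH 2 (π ω) ∂P ≤ secondMomentBound n c := by
  have hmean : Measurable fun ω => (∑ b, X b ω) / n := by fun_prop
  have hint : Integrable (fun ω => ((∑ b, X b ω) / n) ^ 2) P :=
    Integrable.of_bound (hmean.pow_const 2).aestronglyMeasurable 1 (ae_of_all _ fun ω => by
      obtain ⟨h0, h1⟩ := sum_div_mem_Icc (hX · ω)
      rw [Real.norm_of_nonneg (by positivity)]
      exact pow_le_one₀ h0 h1)
  calc ∫ ω, ipssH 2 (π ω) ∂P ≤ ∫ ω, ((∑ b, X b ω) / n) ^ 2 ∂P :=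
        integral_mono_of_nonneg (ae_of_all _ fun ω => ipssH_nonneg 2 _) hint
          (ae_of_all _ fun ω => ipssH_le_pow (sum_div_mem_Icc (hX · ω)).1 (hπ ω))
    _ = (∫ ω, (∑ b, X b ω) ^ 2 ∂P) / (n : ℝ) ^ 2 := by simp_rw [div_pow]; exact integral_div _ _
    _ ≤ (n * c + n * (n - 1) * c ^ 2) / (n : ℝ) ^ 2 := by
        gcongr
        simpa using integral_sq_sum_le hX hXm hc hjoint
    _ = secondMomentBound n c := by
        unfold secondMomentBound
        rcases eq_or_ne (n : ℝ) 0 with h | h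
        · simp [h]
        · field_simp

variable [MeasurableSpace Λ] {μ : Measure Λ} [IsFiniteMeasure μ]

lemma integrable_ipssH_prod {X : Fin n → Λ → Ω → ℝ} (hX : ∀ b l ω, X b l ω = 0 ∨ X b l ω = 1)
    {π : Λ → Ω → ℝ} (hπm : Measurable fun x : Λ × Ω => π x.1 x.2)
    (hπ : ∀ l ω, π l ω ≤ (1 + (∑ b, X b l ω) / n) / 2) :
    Integrable (fun x : Ω × Λ => ipssH 2 (π x.2 x.1)) (P.prod μ) :=
  Integrable.of_bound
    ((measurable_ipssH 2).comp (hπm.comp measurable_swap)).aestronglyMeasurable 1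
    (ae_of_all _ fun x => by
      rw [Real.norm_of_nonneg (ipssH_nonneg 2 _)]
      exact ipssH_two_le_one (hX · x.2 x.1) (hπ x.2 x.1))

lemma integral_integral_ipssH_le {X : Fin n → Λ → Ω → ℝ}
    (hX : ∀ b l ω, X b l ω = 0 ∨ X b l ω = 1) (hXm : ∀ b, Measurable fun x : Λ × Ω => X b x.1 x.2)
    {π : Λ → Ω → ℝ} (hπm : Measurable fun x : Λ × Ω => π x.1 x.2)
    (hπ : ∀ l ω, π l ω ≤ (1 + (∑ b, X b l ω) / n) / 2) {c : Λ → ℝ} (hc : ∀ l, 0 ≤ c l)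
    (hcint : Integrable (fun l => secondMomentBound n (c l)) μ)
    (hjoint : ∀ l, ∀ T : Finset (Fin n), T.Nonempty → #T ≤ 2 →
      P {ω | ∀ b ∈ T, X b l ω = 1} ≤ ENNReal.ofReal (c l ^ #T)) :
    ∫ ω, ∫ l, ipssH 2 (π l ω) ∂μ ∂P ≤ ∫ l, secondMomentBound n (c l) ∂μ := by
  rw [integral_integral_swap (integrable_ipssH_prod hX hπm hπ)]
  exact integral_mono_of_nonneg (ae_of_all _ fun l => integral_nonneg fun ω => ipssH_nonneg 2 _)
    hcint (ae_of_all _ fun l => integral_ipssH_le (hX · l)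
      (fun b => (hXm b).comp measurable_prodMk_left) (hπ l) (hc l) (hjoint l))

end Selection

lemma integral_card_filter_le {Ω ι : Type*} [MeasurableSpace Ω] {P : Measure Ω} (s : Finset ι)
    {A : ι → Ω → ℝ} (hA0 : ∀ j ∈ s, ∀ ω, 0 ≤ A j ω) (hA : ∀ j ∈ s, Integrable (A j) P)
    {τ : ℝ} (hτ : 0 < τ) :
    ∫ ω, (#{j ∈ s | τ ≤ A j ω} : ℝ) ∂P ≤ (∑ j ∈ s, ∫ ω, A j ω ∂P) / τ := by
  have hmarkov : ∀ ω, (#{j ∈ s | τ ≤ A j ω} : ℝ) ≤ (∑ j ∈ s, A j ω) / τ := fun ω => by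
    rw [le_div_iff₀ hτ, ← nsmul_eq_mul]
    exact (card_nsmul_le_sum _ _ _ fun j hj => (mem_filter.1 hj).2).trans
      (sum_le_sum_of_subset_of_nonneg (filter_subset _ s) fun j hj _ => hA0 j hj ω)
  rw [← integral_finsetSum s hA, ← integral_div]
  exact integral_mono_of_nonneg (ae_of_all _ fun ω => Nat.cast_nonneg _)
    ((integrable_finsetSum s hA).div_const τ) (ae_of_all _ hmarkov)

open Classical in
theorem stmt15_general {Ω Λ : Type*} [MeasurableSpace Ω] [MeasurableSpace Λ]
    (P : Measure Ω) [IsProbabilityMeasure P]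
    (μ : Measure Λ) [IsProbabilityMeasure μ]
    (p : ℕ) (S : Finset (Fin p))
    (τ : ℝ) (hτ : τ ∈ Set.Ioc (0:ℝ) 1) (B : ℕ) (hB : 2 ≤ B)
    (q : Λ → ℝ) (hqmeas : Measurable q) (hq : ∀ l, q l ∈ Set.Icc (0:ℝ) p)
    (U : Fin p → Fin B → Λ → Ω → ℝ)
    (hUmeas : ∀ j b, Measurable fun x : Λ × Ω => U j b x.1 x.2)
    (hU01 : ∀ j b l ω, U j b l ω = 0 ∨ U j b l ω = 1)
    (hjoint : ∀ j ∉ S, ∀ l : Λ, ∀ T : Finset (Fin B), T.Nonempty → T.card ≤ 2 →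
      P {ω | ∀ b ∈ T, U j b l ω = 1} ≤ ENNReal.ofReal ((q l / p) ^ (2 * T.card)))
    (pihat : Fin p → Λ → Ω → ℝ)
    (hmeas : ∀ j, Measurable fun x : Λ × Ω => pihat j x.1 x.2)
    (hle : ∀ j ∉ S, ∀ l ω,
      pihat j l ω ≤ (1 + (∑ b, U j b l ω) / B) / 2) :
    ∫ ω, ((Finset.univ.filter (fun j => j ∉ S ∧
        τ ≤ ∫ l, (if pihat j l ω ≥ 1/2 then (2 * pihat j l ω - 1) ^ 2 else 0) ∂μ)).card
          : ℝ) ∂P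
      ≤ (1 / τ) * ∫ l,
          (q l ^ 2 / ((B:ℝ) * p) + ((B:ℝ) - 1) * q l ^ 4 / ((B:ℝ) * (p:ℝ) ^ 3)) ∂μ := by
  set c : Λ → ℝ := fun l => (q l / p) ^ 2
  have hc : ∀ l, c l ∈ Set.Icc (0 : ℝ) 1 := fun l =>
    have hqp : q l / p ∈ Set.Icc (0 : ℝ) 1 :=
      ⟨div_nonneg (hq l).1 p.cast_nonneg, div_le_one_of_le₀ (hq l).2 p.cast_nonneg⟩
    ⟨by positivity, pow_le_one₀ hqp.1 hqp.2⟩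
  have hbound : ∀ l, secondMomentBound B (c l) ∈ Set.Icc (0 : ℝ) 1 := fun l =>
    secondMomentBound_mem_Icc (by omega) (hc l)
  have hcint : Integrable (fun l => secondMomentBound B (c l)) μ :=
    Integrable.of_bound (by unfold secondMomentBound; fun_prop) 1 (ae_of_all _ fun l => by
      rw [Real.norm_of_nonneg (hbound l).1]; exact (hbound l).2)
  have hjoint' : ∀ j ∉ S, ∀ l, ∀ T : Finset (Fin B), T.Nonempty → #T ≤ 2 →
      P {ω | ∀ b ∈ T, U j b l ω = 1} ≤ ENNReal.ofReal (c l ^ #T) := fun j hj l T hT hT2 => by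
    simpa only [c, ← pow_mul] using hjoint j hj l T hT hT2
  calc _ = ∫ ω, (#{j ∈ Sᶜ | τ ≤ ∫ l, ipssH 2 (pihat j l ω) ∂μ} : ℝ) ∂P := by
        congr with ω
        congr 2
        ext j
        simp [ipssH]
    _ ≤ (∑ j ∈ Sᶜ, ∫ ω, ∫ l, ipssH 2 (pihat j l ω) ∂μ ∂P) / τ :=
        integral_card_filter_le _ (fun j _ ω => integral_nonneg fun l => ipssH_nonneg 2 _)
          (fun j hj => (integrable_ipssH_prod (hU01 j) (hmeas j)
            (hle j (mem_compl.1 hj))).integral_prod_left) hτ.1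
    _ ≤ (∑ _j ∈ Sᶜ, ∫ l, secondMomentBound B (c l) ∂μ) / τ := by
        refine div_le_div_of_nonneg_right (sum_le_sum fun j hj => ?_) hτ.1.le
        exact integral_integral_ipssH_le (hU01 j) (hUmeas j) (hmeas j) (hle j (mem_compl.1 hj))
          (fun l => (hc l).1) hcint (hjoint' j (mem_compl.1 hj))
    _ ≤ (p * ∫ l, secondMomentBound B (c l) ∂μ) / τ := by
        rw [sum_const, nsmul_eq_mul]
        exact div_le_div_of_nonneg_right (mul_le_mul_of_nonneg_right
          (by simpa using card_le_univ Sᶜ) (integral_nonneg fun l => (hbound l).1)) hτ.1.le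
    _ = _ := by
        rw [div_eq_inv_mul, one_div, ← integral_const_mul]
        congr 2 with l
        simp only [secondMomentBound, c]
        field_simp

open Classical in
/-- IPSS quadratic bound (Theorem 2, `m = 2`): under the abstract IPSS hypotheses with
joint-selection bounds for `|T| ≤ 2` and selection via `h_2(x) = (2x−1)² 1(x ≥ 1/2)`,
`E(FP) ≤ (1/τ) ∫_Λ ( q(λ)²/(Bp) + (B−1) q(λ)⁴/(B p³) ) μ(dλ)`. -/
theorem stmt15 {Ω Λ : Type*} [MeasurableSpace Ω] [MeasurableSpace Λ]
    (P : Measure Ω) [IsProbabilityMeasure P]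
    (μ : Measure Λ) [IsProbabilityMeasure μ]
    (p : ℕ) (hp : 1 ≤ p) (S : Finset (Fin p))
    (τ : ℝ) (hτ : τ ∈ Set.Ioc (0:ℝ) 1) (B : ℕ) (hB : 2 ≤ B)
    (q : Λ → ℝ) (hqmeas : Measurable q) (hq : ∀ l, q l ∈ Set.Icc (0:ℝ) p)
    (U : Fin p → Fin B → Λ → Ω → ℝ)
    (hUmeas : ∀ j b, Measurable fun x : Λ × Ω => U j b x.1 x.2)
    (hU01 : ∀ j b l ω, U j b l ω = 0 ∨ U j b l ω = 1)
    (hjoint : ∀ j ∉ S, ∀ l : Λ, ∀ T : Finset (Fin B), T.Nonempty → T.card ≤ 2 →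
      P {ω | ∀ b ∈ T, U j b l ω = 1} ≤ ENNReal.ofReal ((q l / p) ^ (2 * T.card)))
    (pihat : Fin p → Λ → Ω → ℝ)
    (hmeas : ∀ j, Measurable fun x : Λ × Ω => pihat j x.1 x.2)
    (hrange : ∀ j l ω, pihat j l ω ∈ Set.Icc (0:ℝ) 1)
    (hle : ∀ j ∉ S, ∀ l ω,
      pihat j l ω ≤ (1 + (∑ b, U j b l ω) / B) / 2) :
    ∫ ω, ((Finset.univ.filter (fun j => j ∉ S ∧
        τ ≤ ∫ l, (if pihat j l ω ≥ 1/2 then (2 * pihat j l ω - 1) ^ 2 else 0) ∂μ)).card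
          : ℝ) ∂P
      ≤ (1 / τ) * ∫ l,
          (q l ^ 2 / ((B:ℝ) * p) + ((B:ℝ) - 1) * q l ^ 4 / ((B:ℝ) * (p:ℝ) ^ 3)) ∂μ :=
  stmt15_general P μ p S τ hτ B hB q hqmeas hq U hUmeas hU01 hjoint pihat hmeas hle
end
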